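/- arXiv:1803.02567 — 2 statements merged into one kernel-verified Lean document; each statement's English description precedes it below -/
import Mathlib

section
/- Under the hypotheses of absolute convergence of s_j = Σ_{n=0}^∞ λ_n^j/γ_n for 0 ≤ j ≤ 2d−1, the linear system Σ_{i=0}^{d−1} p_i s_{i+k} = −s_{d+k} (k = 0, …, d−1) in the unknowns p₀, …, p_{d−1} has a unique solution. -/
/-- Under absolute convergence of `s_j = ∑' n, λ_n^j/γ_n` for
`0 ≤ j ≤ 2d−1`, the linear system `∑_{i<d} p_i s_{i+k} = −s_{d+k}`
(`k = 0, …, d−1`) has a unique solution `(p₀, …, p_{d−1})`. -/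
theorem stmt_4 (d : ℕ) (hd : 1 ≤ d) (lam γ : ℕ → ℝ)
    (hlam : Function.Injective lam) (hγ : ∀ n, 0 < γ n)
    (hsum : ∀ j ≤ 2 * d - 1, Summable fun n => |lam n| ^ j / γ n)
    (s : ℕ → ℝ) (hs : ∀ j, s j = ∑' n, lam n ^ j / γ n) :
    ∃! p : Fin d → ℝ, ∀ k : Fin d,
      ∑ i : Fin d, p i * s (i.1 + k.1) = - s (d + k.1) := by
  have hsum' : ∀ j ≤ 2 * d - 1, Summable fun n => lam n ^ j / γ n := by
    intro j hj
    refine Summable.of_abs ?_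
    exact (hsum j hj).congr fun n => by
      rw [abs_div, abs_pow, abs_of_pos (hγ n)]
  set M : Matrix (Fin d) (Fin d) ℝ := fun k i => s (i.1 + k.1) with hM
  have key : ∀ x : Fin d → ℝ, M.mulVec x = 0 → x = 0 := by
    intro x hx
    have hjk : ∀ (i k : Fin d), i.1 + k.1 ≤ 2 * d - 1 := by
      intro i k; have := i.2; have := k.2; omega
    have hssum : ∀ (i k : Fin d),
        Summable fun n => x k * x i * (lam n ^ (i.1 + k.1) / γ n) :=
      fun i k => ((hsum' _ (hjk i k)).mul_left _)
    have hFsum : Summable fun n => ∑ k : Fin d, ∑ i : Fin d,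
        x k * x i * (lam n ^ (i.1 + k.1) / γ n) :=
      summable_sum fun k _ => summable_sum fun i _ => hssum i k
    have hF : ∀ n, (∑ i : Fin d, x i * lam n ^ i.1) ^ 2 / γ n
        = ∑ k : Fin d, ∑ i : Fin d, x k * x i * (lam n ^ (i.1 + k.1) / γ n) := by
      intro n
      rw [sq, Finset.sum_mul_sum, Finset.sum_div]
      refine Finset.sum_congr rfl fun k _ => ?_
      rw [Finset.sum_div]
      refine Finset.sum_congr rfl fun i _ => ?_
      rw [pow_add]
      field_simp
    have hzero : (∑' n, (∑ i : Fin d, x i * lam n ^ i.1) ^ 2 / γ n) = 0 := by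
      have e1 : (∑' n, (∑ i : Fin d, x i * lam n ^ i.1) ^ 2 / γ n)
          = ∑ k : Fin d, ∑ i : Fin d, x k * x i * s (i.1 + k.1) := by
        rw [tsum_congr hF, Summable.tsum_finsetSum fun k _ => summable_sum fun i _ => hssum i k]
        refine Finset.sum_congr rfl fun k _ => ?_
        rw [Summable.tsum_finsetSum fun i _ => hssum i k]
        refine Finset.sum_congr rfl fun i _ => ?_
        rw [tsum_mul_left, hs (i.1 + k.1)]
      rw [e1]
      have e2 : ∀ k : Fin d, ∑ i : Fin d, x k * x i * s (i.1 + k.1)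
          = x k * M.mulVec x k := by
        intro k
        rw [Matrix.mulVec, dotProduct, Finset.mul_sum]
        refine Finset.sum_congr rfl fun i _ => ?_
        rw [hM]
        ring
      simp only [e2, hx, Pi.zero_apply, mul_zero, Finset.sum_const_zero]
    have hsq : Summable fun n => (∑ i : Fin d, x i * lam n ^ i.1) ^ 2 / γ n :=
      hFsum.congr fun n => (hF n).symm
    have hterm : ∀ n, (∑ i : Fin d, x i * lam n ^ i.1) = 0 := by
      intro n
      have hnn : ∀ m, 0 ≤ (∑ i : Fin d, x i * lam m ^ i.1) ^ 2 / γ m :=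
        fun m => div_nonneg (sq_nonneg _) (hγ m).le
      have hle : (∑ i : Fin d, x i * lam n ^ i.1) ^ 2 / γ n ≤ 0 := by
        rw [← hzero]; exact Summable.le_tsum hsq n fun j _ => hnn j
      have h0 : (∑ i : Fin d, x i * lam n ^ i.1) ^ 2 / γ n = 0 :=
        le_antisymm hle (hnn n)
      have h2 : (∑ i : Fin d, x i * lam n ^ i.1) ^ 2 = 0 := by
        rcases div_eq_zero_iff.mp h0 with h | h
        · exact h
        · exact absurd h (hγ n).ne'
      exact pow_eq_zero_iff two_ne_zero |>.mp h2
    set V : Matrix (Fin d) (Fin d) ℝ := Matrix.vandermonde (fun n : Fin d => lam n.1)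
      with hV
    have hVdet : V.det ≠ 0 := by
      rw [hV, Matrix.det_vandermonde_ne_zero_iff]
      exact fun a b h => Fin.val_injective (hlam h)
    have hVx : V.mulVec x = 0 := by
      funext n
      rw [Matrix.mulVec, dotProduct]
      simp only [hV, Matrix.vandermonde]
      rw [Pi.zero_apply, ← hterm n.1]
      exact Finset.sum_congr rfl fun i _ => mul_comm _ _
    exact Matrix.eq_zero_of_mulVec_eq_zero hVdet hVx
  have hinj : Function.Injective M.mulVecLin := by
    rw [← LinearMap.ker_eq_bot, LinearMap.ker_eq_bot']
    intro x hx; exact key x hx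
  have hsurj : Function.Surjective M.mulVecLin :=
    (LinearMap.injective_iff_surjective).mp hinj
  obtain ⟨p, hp⟩ := hsurj (fun k => - s (d + k.1))
  have hp' : M.mulVec p = fun k => - s (d + k.1) := hp
  have hiff : ∀ q : Fin d → ℝ,
      (∀ k : Fin d, ∑ i : Fin d, q i * s (i.1 + k.1) = - s (d + k.1))
      ↔ M.mulVec q = fun k => - s (d + k.1) := by
    intro q
    constructor
    · intro h; funext k
      rw [Matrix.mulVec, dotProduct, ← h k]
      exact Finset.sum_congr rfl fun i _ => mul_comm _ _
    · intro h k
      have := congrFun h k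
      rw [Matrix.mulVec, dotProduct] at this
      rw [← this]
      exact Finset.sum_congr rfl fun i _ => mul_comm _ _
  refine ⟨p, (hiff p).mpr hp', fun q hq => hinj ?_⟩
  show M.mulVec q = M.mulVec p
  rw [(hiff q).mp hq, hp']
end

section
/- Let L ≥ −1/2 be an integer or half-integer and (η_n)_{n≥0} a sequence of reals with √η_n = n − L + O(1/n) (η_n > 0 for large n). Then the infinite product G(λ) := −∏_{n<L}(η_n − λ) · ∏_{n=L}π(η_n − λ) · ∏_{n>L}(η_n − λ)/(n−L)² converges locally uniformly on ℂ and defines an entire function whose zero set is exactly {η_n : n ≥ 0}. -/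
/-!
For `n > L` the factor is `1 + (η_n - (n - L)² - λ) / (n - L)²`. Squaring
`√η_n = n - L + O(1/n)` shows that `η_n - (n - L)²` stays bounded, so on a disc `|λ| ≤ R` the
factors are `1 + O((1 + R) / (n - L)²)` uniformly. Such products converge locally uniformly, the
limit of the entire partial products is entire, and a product whose factors are summably close to
`1` vanishes only where one of its factors does, i.e. at the points `η_n`.
-/

open Real Filter

section InfiniteProduct

variable {R : Type*} [NormedCommRing R] [NormOneClass R] [CompleteSpace R]

theorem hasProdLocallyUniformly_of_norm_sub_one_le {α : Type*} [TopologicalSpace α]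
    [LocallyCompactSpace α] {f : ℕ → α → R} (hcont : ∀ n, Continuous (f n))
    (hbound : ∀ K, IsCompact K →
      ∃ u : ℕ → ℝ, Summable u ∧ ∀ᶠ n in atTop, ∀ x ∈ K, ‖f n x - 1‖ ≤ u n) :
    HasProdLocallyUniformly f (fun x ↦ ∏' n, f n x) := by
  refine hasProdLocallyUniformly_of_forall_compact fun K hK ↦ ?_
  obtain ⟨u, hu, hfu⟩ := hbound K hK
  simpa using Summable.hasProdUniformlyOn_nat_one_add (f := fun n x ↦ f n x - 1) hK hu hfu
    fun n ↦ ((hcont n).sub continuous_const).continuousOn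

theorem tprod_eq_zero_iff_of_summable_norm_sub_one [NormMulClass R] {ι : Type*} {f : ι → R}
    (hf : Summable fun i ↦ ‖f i - 1‖) : ∏' i, f i = 0 ↔ ∃ i, f i = 0 := by
  refine ⟨fun h ↦ ?_, tprod_of_exists_eq_zero⟩
  by_contra! hne
  exact tprod_one_add_ne_zero_of_summable (f := fun i ↦ f i - 1) (by simpa using hne) hf
    (by simpa using h)

end InfiniteProduct

theorem HasProdLocallyUniformly.differentiable {E : Type*} [NormedCommRing E] [NormedAlgebra ℂ E]
    [CompleteSpace E] {f : ℕ → ℂ → E} {g : ℂ → E} (h : HasProdLocallyUniformly f g)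
    (hf : ∀ n, Differentiable ℂ (f n)) : Differentiable ℂ g := by
  rw [← differentiableOn_univ]
  refine (tendstoLocallyUniformlyOn_univ.mpr h.tendstoLocallyUniformly_finsetRange).differentiableOn
    (.of_forall fun N ↦ ?_) isOpen_univ
  exact (Differentiable.fun_finsetProd fun n _ ↦ hf n).differentiableOn

theorem summable_one_div_natCast_sub_sq (L : ℝ) :
    Summable fun n : ℕ ↦ 1 / ((n : ℝ) - L) ^ 2 := by
  have h := (Real.summable_one_div_nat_add_rpow (-L) 2).mpr one_lt_two
  simpa [← sub_eq_add_neg, Real.rpow_two, sq_abs] using h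

theorem abs_sq_sub_sq_le {s m ε : ℝ} (hm : 0 ≤ m) (h : |s - m| ≤ ε) :
    |s ^ 2 - m ^ 2| ≤ ε * (ε + 2 * m) := by
  have hsum : |s + m| ≤ ε + 2 * m :=
    calc |s + m| = |(s - m) + 2 * m| := by ring_nf
      _ ≤ |s - m| + |2 * m| := abs_add_le _ _
      _ ≤ ε + 2 * m := by rw [abs_of_nonneg (by positivity : 0 ≤ 2 * m)]; linarith
  rw [show s ^ 2 - m ^ 2 = (s - m) * (s + m) by ring, abs_mul]
  exact mul_le_mul h hsum (abs_nonneg _) ((abs_nonneg _).trans h)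

noncomputable def productFactor (L : ℝ) (η : ℕ → ℝ) (n : ℕ) (z : ℂ) : ℂ :=
  if (n : ℝ) < L then ((η n : ℂ) - z)
  else if (n : ℝ) = L then (π : ℂ) * ((η n : ℂ) - z)
  else ((η n : ℂ) - z) / (((n : ℝ) - L) : ℂ) ^ 2

section productFactor

variable {L : ℝ} {η : ℕ → ℝ}

theorem differentiable_productFactor (n : ℕ) : Differentiable ℂ (productFactor L η n) := by
  unfold productFactor
  split_ifs <;> fun_prop

theorem productFactor_eq_zero_iff {n : ℕ} {z : ℂ} : productFactor L η n z = 0 ↔ z = η n := by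
  unfold productFactor
  split_ifs with _ hnL
  · rw [sub_eq_zero, eq_comm]
  · simp [Real.pi_ne_zero, sub_eq_zero, eq_comm]
  · have hm : ((n : ℝ) : ℂ) - L ≠ 0 := by exact_mod_cast sub_ne_zero.mpr hnL
    rw [div_eq_zero_iff, or_iff_left (pow_ne_zero 2 hm), sub_eq_zero, eq_comm]

theorem productFactor_of_lt {n : ℕ} (hn : L < n) (z : ℂ) :
    productFactor L η n z = ((η n : ℂ) - z) / (((n : ℝ) - L) : ℂ) ^ 2 := by
  rw [productFactor, if_neg hn.not_gt, if_neg hn.ne']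

theorem norm_productFactor_sub_one_le {n : ℕ} (hn : L < n) (z : ℂ) :
    ‖productFactor L η n z - 1‖ ≤ (|η n - ((n : ℝ) - L) ^ 2| + ‖z‖) / ((n : ℝ) - L) ^ 2 := by
  have hm : (((n : ℝ) - L : ℝ) : ℂ) ^ 2 ≠ 0 := by
    exact_mod_cast pow_ne_zero 2 (sub_pos.mpr hn).ne'
  have hsplit : (η n : ℂ) - z - (((n : ℝ) - L : ℝ) : ℂ) ^ 2
      = ((η n - ((n : ℝ) - L) ^ 2 : ℝ) : ℂ) - z := by push_cast; ring
  rw [productFactor_of_lt hn, ← Complex.ofReal_sub, div_sub_one hm, norm_div, hsplit, norm_pow,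
    Complex.norm_real, Real.norm_eq_abs, sq_abs]
  gcongr
  exact (norm_sub_le _ _).trans_eq (by rw [Complex.norm_real, Real.norm_eq_abs])

theorem exists_eventually_abs_sub_sq_le
    (hasym : ∃ C : ℝ, ∀ᶠ n : ℕ in atTop, 0 < η n ∧ |√(η n) - ((n : ℝ) - L)| ≤ C / n) :
    ∃ D : ℝ, ∀ᶠ n : ℕ in atTop, |η n - ((n : ℝ) - L) ^ 2| ≤ D := by
  obtain ⟨C, hC⟩ := hasym
  refine ⟨C * C + 2 * C * (1 + |L|), ?_⟩
  filter_upwards [hC, eventually_gt_atTop ⌈L⌉₊, eventually_ge_atTop 1] with n ⟨hη, hn⟩ hnL hn1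
  have hLn : L < n := Nat.lt_of_ceil_lt hnL
  have hn1 : (1 : ℝ) ≤ n := by exact_mod_cast hn1
  have hC : 0 ≤ C := by
    have := (abs_nonneg _).trans hn
    rwa [le_div_iff₀ (by positivity), zero_mul] at this
  have hCn : C / n ≤ C := div_le_self hC hn1
  have hmn : ((n : ℝ) - L) / n ≤ 1 + |L| := by
    rw [div_le_iff₀ (by positivity)]
    nlinarith [neg_abs_le L, abs_nonneg L]
  rw [← Real.sq_sqrt hη.le]
  calc |√(η n) ^ 2 - ((n : ℝ) - L) ^ 2| ≤ C / n * (C / n + 2 * ((n : ℝ) - L)) :=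
        abs_sq_sub_sq_le (sub_pos.mpr hLn).le hn
    _ = C / n * (C / n) + 2 * C * (((n : ℝ) - L) / n) := by ring
    _ ≤ C * C + 2 * C * (1 + |L|) := by gcongr

theorem eventually_norm_productFactor_sub_one_le {D : ℝ}
    (hD : ∀ᶠ n : ℕ in atTop, |η n - ((n : ℝ) - L) ^ 2| ≤ D) (R : ℝ) :
    ∀ᶠ n : ℕ in atTop, ∀ z ∈ Metric.closedBall (0 : ℂ) R,
      ‖productFactor L η n z - 1‖ ≤ (D + R) * (1 / ((n : ℝ) - L) ^ 2) := by
  filter_upwards [hD, eventually_gt_atTop ⌈L⌉₊] with n hn hnL z hz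
  rw [mul_one_div]
  refine (norm_productFactor_sub_one_le (Nat.lt_of_ceil_lt hnL) z).trans ?_
  gcongr
  simpa using hz

end productFactor

theorem stmt_8_general (L : ℝ)
    (η : ℕ → ℝ)
    (hasym : ∃ C : ℝ, ∀ᶠ n : ℕ in atTop,
      0 < η n ∧ |Real.sqrt (η n) - ((n : ℝ) - L)| ≤ C / n) :
    ∃ G : ℂ → ℂ, Differentiable ℂ G ∧
      TendstoLocallyUniformly
        (fun (N : ℕ) (z : ℂ) =>
          -∏ n ∈ Finset.range N,
            (if (n : ℝ) < L then ((η n : ℂ) - z)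
             else if (n : ℝ) = L then (π : ℂ) * ((η n : ℂ) - z)
             else ((η n : ℂ) - z) / (((n : ℝ) - L) : ℂ) ^ 2))
        G atTop ∧
      (∀ z : ℂ, G z = 0 ↔ ∃ n : ℕ, z = (η n : ℝ)) := by
  obtain ⟨D, hD⟩ := exists_eventually_abs_sub_sq_le hasym
  have hsum (R : ℝ) := (summable_one_div_natCast_sub_sq L).mul_left (D + R)
  have hbound := eventually_norm_productFactor_sub_one_le hD
  have hprod : HasProdLocallyUniformly (productFactor L η) (fun z ↦ ∏' n, productFactor L η n z) :=
    hasProdLocallyUniformly_of_norm_sub_one_le (fun n ↦ (differentiable_productFactor n).continuous)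
      fun K hK ↦ by
        obtain ⟨R, hKR⟩ := hK.isBounded.subset_closedBall 0
        exact ⟨_, hsum R, (hbound R).mono fun n hn z hz ↦ hn z (hKR hz)⟩
  refine ⟨fun z ↦ -∏' n, productFactor L η n z,
    (hprod.differentiable differentiable_productFactor).neg,
    hprod.tendstoLocallyUniformly_finsetRange.neg, fun z ↦ ?_⟩
  have hz : Summable fun n ↦ ‖productFactor L η n z - 1‖ :=
    (hsum ‖z‖).of_norm_bounded_eventually_nat <| (hbound ‖z‖).mono fun n hn ↦ by
      simpa using hn z (by simp)
  simp only [neg_eq_zero, tprod_eq_zero_iff_of_summable_norm_sub_one hz, productFactor_eq_zero_iff]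

/-- For an integer or half-integer `L ≥ −1/2` and reals `η_n` with
`√η_n = n − L + O(1/n)`, the infinite product
`G(λ) = −∏_{n<L}(η_n−λ) ∏_{n=L} π(η_n−λ) ∏_{n>L} (η_n−λ)/(n−L)²`
converges locally uniformly on `ℂ` and defines an entire function whose
zero set is exactly `{η_n : n ≥ 0}`. -/
theorem stmt_8 (L : ℝ) (hL : ∃ m : ℤ, (m : ℝ) = 2 * L) (hL' : -(1/2 : ℝ) ≤ L)
    (η : ℕ → ℝ)
    (hasym : ∃ C : ℝ, ∀ᶠ n : ℕ in atTop,
      0 < η n ∧ |Real.sqrt (η n) - ((n : ℝ) - L)| ≤ C / n) :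
    ∃ G : ℂ → ℂ, Differentiable ℂ G ∧
      TendstoLocallyUniformly
        (fun (N : ℕ) (z : ℂ) =>
          -∏ n ∈ Finset.range N,
            (if (n : ℝ) < L then ((η n : ℂ) - z)
             else if (n : ℝ) = L then (π : ℂ) * ((η n : ℂ) - z)
             else ((η n : ℂ) - z) / (((n : ℝ) - L) : ℂ) ^ 2))
        G atTop ∧
      (∀ z : ℂ, G z = 0 ↔ ∃ n : ℕ, z = (η n : ℝ)) :=
  stmt_8_general L η hasym
end
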